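/- arXiv:1904.10565 — 2 statements merged into one kernel-verified Lean document; each statement's English description precedes it below -/
import Mathlib

section
/- Every group homomorphism from a Polish topological group to the integers (with the discrete topology) is continuous. -/
open Filter Topology Function Set

/-!
If `f` were discontinuous, elements `g` with `f g ≠ 0` would accumulate at `1`. Fix a complete
metric on `G`. Picking such elements `g n` one after the other, each so close to `1` that it moves
every nested product built from `g 0, …, g (n - 1)` by at most `2⁻ⁿ`, the nested products converge
and their limits satisfy `w n = g n * w (n + 1) ^ (2 |f (g n)| + 1)`. Applying `f` yields integers
with `|f (w (n + 1))| < |f (w n)|` for every `n`, which is impossible.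
-/

theorem exists_seq_of_forall_exists_update {α : Type*} [Nonempty α] (P : ℕ → (ℕ → α) → Prop)
    (hP : ∀ n s t, (∀ k ≤ n, s k = t k) → P n s → P n t)
    (h : ∀ n s, ∃ a, P n (update s n a)) : ∃ s, ∀ n, P n s := by
  choose next hnext using h
  let S : ℕ → ℕ → α := fun n =>
    Nat.rec (fun _ => Classical.arbitrary α) (fun n s => update s n (next n s)) n
  have hS : ∀ k m, k < m → S m k = S (k + 1) k := by
    intro k m hkm
    induction m, hkm using Nat.le_induction with
    | base => rfl
    | succ m hkm ih => exact (update_of_ne (by omega) _ _).trans ih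
  refine ⟨fun k => S (k + 1) k, fun n => hP n _ _ (fun k hk => hS k (n + 1) (by omega)) ?_⟩
  exact hnext n (S n)

section SeqComp

variable {X : Type*}

def seqComp (F : ℕ → X → X) : ℕ → ℕ → X → X
  | _, 0 => id
  | N, k + 1 => F N ∘ seqComp F (N + 1) k

theorem seqComp_succ' (F : ℕ → X → X) (N k : ℕ) :
    seqComp F N (k + 1) = seqComp F N k ∘ F (N + k) := by
  induction k generalizing N with
  | zero => rfl
  | succ k ih =>
    rw [seqComp, ih, seqComp, Nat.add_right_comm, Nat.add_assoc]
    rfl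

theorem seqComp_congr {F F' : ℕ → X → X} {N k : ℕ} (h : ∀ m, N ≤ m → m < N + k → F m = F' m) :
    seqComp F N k = seqComp F' N k := by
  induction k generalizing N with
  | zero => rfl
  | succ k ih =>
    rw [seqComp, seqComp, h N le_rfl (by omega), ih fun m hm hm' => h m (by omega) (by omega)]

theorem continuous_seqComp [TopologicalSpace X] {F : ℕ → X → X} (hF : ∀ m, Continuous (F m))
    (N k : ℕ) : Continuous (seqComp F N k) := by
  induction k generalizing N with
  | zero => exact continuous_id
  | succ k ih => exact (hF N).comp (ih (N + 1))

theorem exists_forall_eq_apply_of_cauchySeq [UniformSpace X] [CompleteSpace X] [T2Space X]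
    {F : ℕ → X → X} (hF : ∀ m, Continuous (F m)) (x₀ : X)
    (h : ∀ N, CauchySeq fun k => seqComp F N k x₀) : ∃ w : ℕ → X, ∀ n, w n = F n (w (n + 1)) := by
  choose w hw using fun N => cauchySeq_tendsto_of_complete (h N)
  refine ⟨w, fun n => tendsto_nhds_unique ((hw n).comp (tendsto_add_atTop_nat 1)) ?_⟩
  exact ((hF n).tendsto _).comp (hw (n + 1))

theorem exists_seq_dist_seqComp_succ_le [MetricSpace X] {ι : Type*} (T : ι → X → X)
    (hT : ∀ i, Continuous (T i)) {x₀ : X} (hx₀ : x₀ ∈ closure (range fun i => T i x₀)) :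
    ∃ i : ℕ → ι, ∀ N j, dist (seqComp (fun m => T (i m)) N (j + 1) x₀)
      (seqComp (fun m => T (i m)) N j x₀) ≤ (1 / 2) ^ (N + j) := by
  have : Nonempty ι := by
    obtain ⟨_, ⟨i, -⟩⟩ := (mem_closure_iff_frequently.1 hx₀).exists
    exact ⟨i⟩
  refine (exists_seq_of_forall_exists_update
    (fun n i => ∀ N j, N + j = n → dist (seqComp (fun m => T (i m)) N (j + 1) x₀)
      (seqComp (fun m => T (i m)) N j x₀) ≤ (1 / 2) ^ n) ?congr ?step).imp
    fun i hi N j => hi _ N j rfl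
  case congr =>
    intro n s t hst hs N j hNj
    have hst' : ∀ k ≤ j + 1, seqComp (fun m => T (t m)) N k = seqComp (fun m => T (s m)) N k :=
      fun k hk => seqComp_congr fun m _ hm => by rw [hst m (by omega)]
    rw [hst' _ le_rfl, hst' _ (by omega)]
    exact hs N j hNj
  case step =>
    intro n s
    have hnear : ∀ᶠ y in 𝓝 x₀, ∀ N ∈ Finset.range (n + 1),
        dist (seqComp (fun m => T (s m)) N (n - N) y)
          (seqComp (fun m => T (s m)) N (n - N) x₀) ≤ (1 / 2) ^ n :=
      (eventually_all_finset _).2 fun N _ =>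
        ((continuous_seqComp (fun m => hT (s m)) N (n - N)).tendsto x₀).eventually
          (Metric.closedBall_mem_nhds _ (by positivity))
    obtain ⟨_, ⟨a, rfl⟩, ha⟩ := ((mem_closure_iff_frequently.1 hx₀).and_eventually hnear).exists
    refine ⟨a, fun N j hNj => ?_⟩
    subst hNj
    have hpre : seqComp (fun m => T (update s (N + j) a m)) N j = seqComp (fun m => T (s m)) N j :=
      seqComp_congr fun m _ hm => by rw [update_of_ne (by omega)]
    rw [seqComp_succ', comp_apply, hpre, update_self]
    simpa using ha N (Finset.mem_range.2 (by omega))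

theorem exists_seq_eq_apply_of_mem_closure [MetricSpace X] [CompleteSpace X] {ι : Type*}
    (T : ι → X → X) (hT : ∀ i, Continuous (T i)) {x₀ : X}
    (hx₀ : x₀ ∈ closure (range fun i => T i x₀)) :
    ∃ (i : ℕ → ι) (w : ℕ → X), ∀ n, w n = T (i n) (w (n + 1)) := by
  obtain ⟨i, hi⟩ := exists_seq_dist_seqComp_succ_le T hT hx₀
  refine ⟨i, exists_forall_eq_apply_of_cauchySeq (fun m => hT (i m)) x₀ fun N =>
    cauchySeq_of_le_geometric (1 / 2) ((1 / 2) ^ N) (by norm_num) fun j => ?_⟩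
  rw [dist_comm, ← pow_add]
  exact hi N j

end SeqComp

theorem Int.abs_lt_abs_of_eq_add_mul {a b c : ℤ} (hb : b ≠ 0) (h : a = b + (2 * |b| + 1) * c) :
    |c| < |a| := by
  have hb' : 1 ≤ |b| := Int.one_le_abs hb
  have hc : (2 * |b| + 1) * |c| ≤ |a| + |b| := by
    rw [← abs_of_pos (by positivity : 0 < 2 * |b| + 1), ← abs_mul,
      show (2 * |b| + 1) * c = a - b by linarith]
    exact abs_sub _ _
  by_contra! hca
  have hc1 : |c| < 1 := by
    by_contra! hc1
    nlinarith
  obtain rfl : c = 0 := by rw [abs_lt] at hc1; omega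
  exact hb (by simp_all)

theorem Int.not_forall_eq_add_mul {a b : ℕ → ℤ} (hb : ∀ n, b n ≠ 0) :
    ¬ ∀ n, a n = b n + (2 * |b n| + 1) * a (n + 1) := fun h => by
  obtain ⟨n, hn⟩ := WellFounded.not_rel_apply_succ (r := (· < ·)) fun n => (a n).natAbs
  have := Int.abs_lt_abs_of_eq_add_mul (hb n) (h n)
  rw [Int.abs_eq_natAbs, Int.abs_eq_natAbs] at this
  exact hn (by exact_mod_cast this)

theorem MonoidHom.continuous_of_one_notMem_closure {G H : Type*} [Group G] [TopologicalSpace G]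
    [IsTopologicalGroup G] [Monoid H] [TopologicalSpace H] [DiscreteTopology H] (f : G →* H)
    (h : (1 : G) ∉ closure {g | f g ≠ 1}) : Continuous f := by
  refine continuous_of_continuousAt_one f ?_
  rw [ContinuousAt, map_one, nhds_discrete H, tendsto_pure]
  simpa [mem_closure_iff_frequently, Filter.not_frequently] using h

/-- Dudley's automatic continuity theorem specialized to `ℤ`:
every group homomorphism from a Polish group to the integers
(with the discrete topology) is continuous. -/
theorem dudley_automatic_continuity
    (G : Type*) [Group G] [TopologicalSpace G] [IsTopologicalGroup G]
    [PolishSpace G] (f : G →* Multiplicative ℤ) :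
    Continuous f := by
  by_contra hf
  let := TopologicalSpace.upgradeIsCompletelyMetrizable G
  let φ : G → ℤ := fun g => (f g).toAdd
  obtain ⟨g, w, hw⟩ := exists_seq_eq_apply_of_mem_closure
    (fun (g : {g : G // f g ≠ 1}) (x : G) => g * x ^ (2 * (φ g).natAbs + 1)) (fun _ => by fun_prop)
    (x₀ := 1) (by simpa using mt f.continuous_of_one_notMem_closure hf)
  refine Int.not_forall_eq_add_mul (a := fun n => φ (w n)) (b := fun n => φ (g n))
    (fun n => by simpa [φ] using (g n).2) fun n => ?_
  simp [φ, hw n]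
end

section
/- Let (A_n) be a sequence of free abelian groups with A_n having basis {τ, ∂_1^{(n)}, …, ∂_{m_n}^{(n)}} with m_n ≥ 1, and maps A_n → A_{n+1} each of one of the forms: (i) kill one basis element ∂_i (cap with punctured disk), (ii) rename ∂_i to a new basis element ∂_i' (punctured annulus), or (iii) replace ∂_i by a sum ∂_{i_0} + ∂_{i_1} of two new basis elements (pair of pants), fixing all other basis elements and τ. Suppose (f_n : A_n → ℤ) is a compatible sequence of homomorphisms (f_{n+1} composed with the map A_n → A_{n+1} equals f_n) and f_N(∂_i^{(N)}) > 0 for some N and i. Then there exists an infinite sequence of indices n_1 < n_2 < ⋯ and basis elements ∂^{(n_k)} with f_{n_k}(∂^{(n_k)}) > 0, such that each ∂^{(n_k)} arises from ∂^{(n_{k-1})} under the transition maps. -/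
/-!
Every transition map sends a boundary class to a sum of distinct boundary classes (none for a cap,
one for an annulus or a renamed class, two for a pair of pants). By compatibility `f (n + 1)` takes
the same positive value on that sum as `f n` on the original class, so one of the summands is
again positive; iterating this choice gives the chain.
-/

open Finsupp

theorem exists_seq_of_forall_exists_succ {X : ℕ → Type*} (P : ∀ n, X n → Prop)
    (R : ∀ n, X n → X (n + 1) → Prop) (step : ∀ n x, P n x → ∃ y, P (n + 1) y ∧ R n x y)
    (N : ℕ) (x : X N) (hx : P N x) :
    ∃ b : ∀ k, X (N + k), (∀ k, P (N + k) (b k)) ∧ ∀ k, R (N + k) (b k) (b (k + 1)) := by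
  choose next hnextP hnextR using step
  let b : ∀ k, {y : X (N + k) // P (N + k) y} :=
    fun k => Nat.rec ⟨x, hx⟩ (fun k y => ⟨next _ y.1 y.2, hnextP _ _ y.2⟩) k
  exact ⟨fun k => (b k).1, fun k => (b k).2, fun k => hnextR _ _ (b k).2⟩

section SumOfBoundaryClasses

variable {β : Type*}

theorem sum_single_some_apply_of_mem {s : Finset β} {j : β} (hj : j ∈ s) :
    (∑ j' ∈ s, single (some j') (1 : ℤ)) (some j) = 1 := by
  classical
  simp [Finset.sum_apply', single_apply, hj]

theorem exists_mem_pos_of_pos_sum_single_some (g : (Option β →₀ ℤ) →+ ℤ) {s : Finset β}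
    (hpos : 0 < g (∑ j ∈ s, single (some j) 1)) : ∃ j ∈ s, 0 < g (single (some j) 1) := by
  rw [map_sum] at hpos
  exact Finset.exists_lt_of_sum_lt (by simpa using hpos)

end SumOfBoundaryClasses

theorem exists_pos_successor {α β : Type*} (T : (Option α →₀ ℤ) →+ (Option β →₀ ℤ))
    (f : (Option α →₀ ℤ) →+ ℤ) (f' : (Option β →₀ ℤ) →+ ℤ) (hcompat : f'.comp T = f) {i : α}
    (hT : ∃ s : Finset β, T (single (some i) 1) = ∑ j ∈ s, single (some j) 1)
    (hpos : 0 < f (single (some i) 1)) :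
    ∃ j, 0 < f' (single (some j) 1) ∧ T (single (some i) 1) (some j) ≠ 0 := by
  obtain ⟨s, hs⟩ := hT
  have hsum : 0 < f' (∑ j ∈ s, single (some j) 1) := by
    rwa [← hs, ← AddMonoidHom.comp_apply, hcompat]
  obtain ⟨j, hjs, hj⟩ := exists_mem_pos_of_pos_sum_single_some f' hsum
  exact ⟨j, hj, by simp [hs, sum_single_some_apply_of_mem hjs]⟩

theorem exists_finset_of_boundary_transition {α β : Type*}
    (T : (Option α →₀ ℤ) →+ (Option β →₀ ℤ)) {i₀ : α} (e : {i : α // i ≠ i₀} ↪ β)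
    (he : ∀ (i : α) (h : i ≠ i₀), T (single (some i) 1) = single (some (e ⟨i, h⟩)) 1)
    (hi₀ : T (single (some i₀) 1) = 0 ∨
      (∃ j : β, T (single (some i₀) 1) = single (some j) 1) ∨
      (∃ j₀ j₁ : β, j₀ ≠ j₁ ∧ T (single (some i₀) 1) = single (some j₀) 1 + single (some j₁) 1))
    (i : α) : ∃ s : Finset β, T (single (some i) 1) = ∑ j ∈ s, single (some j) 1 := by
  classical
  by_cases h : i = i₀
  · subst h
    rcases hi₀ with hcap | ⟨j, hannulus⟩ | ⟨j₀, j₁, hne, hpants⟩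
    · exact ⟨∅, by simpa using hcap⟩
    · exact ⟨{j}, by simpa using hannulus⟩
    · exact ⟨{j₀, j₁}, by rw [Finset.sum_pair hne, hpants]⟩
  · exact ⟨{e ⟨i, h⟩}, by simpa using he i h⟩

theorem positivity_propagates_in_exhaustion_general
    (ι : ℕ → Type)
    (T : ∀ n : ℕ, (Option (ι n) →₀ ℤ) →+ (Option (ι (n + 1)) →₀ ℤ))
    (hT : ∀ n : ℕ, ∃ (i₀ : ι n) (e : {i : ι n // i ≠ i₀} ↪ ι (n + 1)),
      (T n (single none 1) = single none 1) ∧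
      (∀ (i : ι n) (h : i ≠ i₀),
        T n (single (some i) 1) = single (some (e ⟨i, h⟩)) 1) ∧
      ((T n (single (some i₀) 1) = 0) ∨
       (∃ j : ι (n + 1), (∀ (i : ι n) (h : i ≠ i₀), e ⟨i, h⟩ ≠ j) ∧
          T n (single (some i₀) 1) = single (some j) 1) ∨
       (∃ j₀ j₁ : ι (n + 1), j₀ ≠ j₁ ∧
          (∀ (i : ι n) (h : i ≠ i₀), e ⟨i, h⟩ ≠ j₀ ∧ e ⟨i, h⟩ ≠ j₁) ∧
          T n (single (some i₀) 1) = single (some j₀) 1 + single (some j₁) 1)))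
    (f : ∀ n : ℕ, (Option (ι n) →₀ ℤ) →+ ℤ)
    (hcompat : ∀ n : ℕ, (f (n + 1)).comp (T n) = f n)
    (N : ℕ) (i : ι N) (hpos : 0 < f N (single (some i) 1)) :
    ∃ b : ∀ k : ℕ, ι (N + k),
      (∀ k : ℕ, 0 < f (N + k) (single (some (b k)) 1)) ∧
      (∀ k : ℕ, (T (N + k) (single (some (b k)) 1)) (some (b (k + 1))) ≠ 0) := by
  have step : ∀ n (i : ι n), 0 < f n (single (some i) 1) →
      ∃ j, 0 < f (n + 1) (single (some j) 1) ∧ T n (single (some i) 1) (some j) ≠ 0 := by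
    intro n i hi
    obtain ⟨i₀, e, -, he, hi₀⟩ := hT n
    have hsum := exists_finset_of_boundary_transition (T n) e he
      (hi₀.imp_right (Or.imp (fun ⟨j, _, hj⟩ => ⟨j, hj⟩)
        (fun ⟨j₀, j₁, hne, _, hj⟩ => ⟨j₀, j₁, hne, hj⟩))) i
    exact exists_pos_successor (T n) (f n) (f (n + 1)) (hcompat n) hsum hi
  exact exists_seq_of_forall_exists_succ _ _ step N i hpos

/-- Each `A n` is the free abelian group `Option (ι n) →₀ ℤ`, with
basis element `Finsupp.single none 1` playing the role of `τ` and the elements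
`Finsupp.single (some i) 1` for `i : ι n` playing the role of the boundary classes
`∂_i`.  Every transition map `T n : A n → A (n+1)` fixes `τ`, sends all boundary
basis elements except one distinguished element `∂_{i₀}` bijectively (via an
embedding `e`) to boundary basis elements of `A (n+1)`, and sends `∂_{i₀}` either
to `0` (capping with a punctured disk), to a single new basis element (gluing a
punctured annulus), or to a sum of two new basis elements (gluing a pair of
pants).  If a compatible family of homomorphisms `f n : A n → ℤ` is positive on
some boundary class of `A N`, then there is an infinite chain of boundary
classes, each arising from the previous one under the transition maps, on which
the homomorphisms are positive. -/
theorem positivity_propagates_in_exhaustion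
    (ι : ℕ → Type) [∀ n, Nonempty (ι n)]
    (T : ∀ n : ℕ, (Option (ι n) →₀ ℤ) →+ (Option (ι (n + 1)) →₀ ℤ))
    (hT : ∀ n : ℕ, ∃ (i₀ : ι n) (e : {i : ι n // i ≠ i₀} ↪ ι (n + 1)),
      (T n (single none 1) = single none 1) ∧
      (∀ (i : ι n) (h : i ≠ i₀),
        T n (single (some i) 1) = single (some (e ⟨i, h⟩)) 1) ∧
      ((T n (single (some i₀) 1) = 0) ∨
       (∃ j : ι (n + 1), (∀ (i : ι n) (h : i ≠ i₀), e ⟨i, h⟩ ≠ j) ∧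
          T n (single (some i₀) 1) = single (some j) 1) ∨
       (∃ j₀ j₁ : ι (n + 1), j₀ ≠ j₁ ∧
          (∀ (i : ι n) (h : i ≠ i₀), e ⟨i, h⟩ ≠ j₀ ∧ e ⟨i, h⟩ ≠ j₁) ∧
          T n (single (some i₀) 1) = single (some j₀) 1 + single (some j₁) 1)))
    (f : ∀ n : ℕ, (Option (ι n) →₀ ℤ) →+ ℤ)
    (hcompat : ∀ n : ℕ, (f (n + 1)).comp (T n) = f n)
    (N : ℕ) (i : ι N) (hpos : 0 < f N (single (some i) 1)) :
    ∃ b : ∀ k : ℕ, ι (N + k),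
      (∀ k : ℕ, 0 < f (N + k) (single (some (b k)) 1)) ∧
      (∀ k : ℕ, (T (N + k) (single (some (b k)) 1)) (some (b (k + 1))) ≠ 0) :=
  positivity_propagates_in_exhaustion_general ι T hT f hcompat N i hpos
end
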